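/- Let f ∈ W^{1,p}(I) for 1 ≤ p ≤ ∞ be a continuous real-valued function on a closed bounded interval I. Then for every θ with 0 < θ < p/(p+1), dim_{A,reg}^θ(Graph(f)) ≤ 1 + θ/((1−θ)p). -/

import Mathlib

open Set Metric Filter Topology MeasureTheory

/-- Least number of sets of diameter at most `r` needed to cover `F` (junk `0` if no finite cover). -/
noncomputable def coverN (F : Set (ℝ × ℝ)) (r : ℝ) : ℕ :=
  sInf {n : ℕ | ∃ U : Fin n → Set (ℝ × ℝ), F ⊆ ⋃ i, U i ∧ ∀ i, Metric.diam (U i) ≤ r}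

/-- Oscillation of `f` over `J`. -/
noncomputable def osc (f : ℝ → ℝ) (J : Set ℝ) : ℝ :=
  sSup {x | ∃ t ∈ J, ∃ s ∈ J, x = |f t - f s|}

/-- Graph of `f` over `I`. -/
def FunGraph (f : ℝ → ℝ) (I : Set ℝ) : Set (ℝ × ℝ) := (fun t => (t, f t)) '' I

/-- Assouad spectrum with parameter `θ`, defined via scales `r = R^(1/θ)`. -/
noncomputable def assouadSpectrum (E : Set (ℝ × ℝ)) (θ : ℝ) : ℝ :=
  sInf {β : ℝ | 0 < β ∧ ∃ C > 0, ∀ z ∈ E, ∀ R : ℝ, 0 < R → R < 1 →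
    (coverN (Metric.closedBall z R ∩ E) (R ^ (1/θ)) : ℝ) ≤ C * (R / R ^ (1/θ)) ^ β}

/-- Regularized (upper) Assouad spectrum: `sup_{0<θ'<θ} dim_A^{θ'}`. -/
noncomputable def assouadSpectrumReg (E : Set (ℝ × ℝ)) (θ : ℝ) : ℝ :=
  sSup {d : ℝ | ∃ θ' : ℝ, 0 < θ' ∧ θ' < θ ∧ d = assouadSpectrum E θ'}

/-- Assouad dimension, via covering numbers. -/
noncomputable def assouadDim (E : Set (ℝ × ℝ)) : ℝ :=
  sInf {β : ℝ | 0 < β ∧ ∃ C > 0, ∀ z ∈ E, ∀ R r : ℝ, 0 < r → r ≤ R →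
    (coverN (Metric.closedBall z R ∩ E) r : ℝ) ≤ C * (R / r) ^ β}

/-- Upper box dimension, via covering numbers. -/
noncomputable def upperBoxDim (E : Set (ℝ × ℝ)) : ℝ :=
  Filter.limsup (fun r : ℝ => Real.log (coverN E r) / Real.log (1 / r)) (nhdsWithin 0 (Set.Ioi 0))

/-!
Fix `θ' < θ`, a ball of radius `R < 1` centred on the graph, and `r = R ^ (1 / θ')`. Cut
`[z.1 - R, z.1 + R]` into about `2R / r` columns of width `r`. Over a column the graph stays within
`∫ |f'|` (over that column) of its value at the left end, so `1 + 2 (∫ |f'|) / r` squares of side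
`r` cover it. Summing over the columns and applying Hölder on an interval of length at most `3R`
gives `N(B(z, R) ∩ Graph f, r) ≲ R / r + ‖f'‖_p R ^ (1 - 1/p) / r`. Both terms are at most
`(R / r) ^ (1 + θ / ((1 - θ) p))`: for the second one this is an inequality between exponents of
`R`, and it holds because `θ' ≤ θ`.
-/

lemma coverN_le_card {ι : Type*} [Fintype ι] {F : Set (ℝ × ℝ)} {r : ℝ} (U : ι → Set (ℝ × ℝ))
    (hFU : F ⊆ ⋃ i, U i) (hU : ∀ i, Metric.diam (U i) ≤ r) : coverN F r ≤ Fintype.card ι := by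
  refine Nat.sInf_le ⟨U ∘ (Fintype.equivFin ι).symm, ?_, fun j => hU _⟩
  rwa [Function.comp_def, (Fintype.equivFin ι).symm.surjective.iUnion_comp U]

lemma diam_Icc_prod_Icc_le {c₁ d₁ c₂ d₂ r : ℝ} (hr : 0 ≤ r) (h₁ : d₁ - c₁ ≤ r) (h₂ : d₂ - c₂ ≤ r) :
    Metric.diam (Icc c₁ d₁ ×ˢ Icc c₂ d₂) ≤ r := by
  refine Metric.diam_le_of_forall_dist_le hr fun x hx y hy => ?_
  rw [Prod.dist_eq]
  exact max_le ((Real.dist_le_of_mem_Icc hx.1 hy.1).trans h₁)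
    ((Real.dist_le_of_mem_Icc hx.2 hy.2).trans h₂)

lemma coverN_le_sum_of_forall_mem_grid {F : Set (ℝ × ℝ)} {r x₀ : ℝ} (hr : 0 ≤ r) {n : ℕ}
    {y : ℕ → ℝ} {m : ℕ → ℕ}
    (hF : ∀ w ∈ F, ∃ i < n, ∃ j < m i,
      w ∈ Icc (x₀ + i * r) (x₀ + (i + 1) * r) ×ˢ Icc (y i + j * r) (y i + (j + 1) * r)) :
    coverN F r ≤ ∑ i ∈ Finset.range n, m i := by
  let U : (Σ i : Fin n, Fin (m i)) → Set (ℝ × ℝ) := fun ij =>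
    Icc (x₀ + ij.1 * r) (x₀ + (ij.1 + 1) * r) ×ˢ Icc (y ij.1 + ij.2 * r) (y ij.1 + (ij.2 + 1) * r)
  have hFU : F ⊆ ⋃ ij, U ij := fun w hw => by
    obtain ⟨i, hi, j, hj, hw⟩ := hF w hw
    exact mem_iUnion.2 ⟨⟨⟨i, hi⟩, ⟨j, hj⟩⟩, hw⟩
  have hU : ∀ ij, Metric.diam (U ij) ≤ r := fun ij =>
    diam_Icc_prod_Icc_le hr (le_of_eq (by ring)) (le_of_eq (by ring))
  simpa [Fintype.card_sigma, Fin.sum_univ_eq_sum_range] using coverN_le_card U hFU hU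

lemma exists_lt_floor_div_add_one_mem_Icc {x₀ x L r : ℝ} (hr : 0 < r) (h₀ : x₀ ≤ x)
    (hL : x ≤ x₀ + L) :
    ∃ i < ⌊L / r⌋₊ + 1, x ∈ Icc (x₀ + i * r) (x₀ + (i + 1) * r) := by
  have hx : 0 ≤ (x - x₀) / r := div_nonneg (by linarith) hr.le
  refine ⟨⌊(x - x₀) / r⌋₊, Nat.lt_succ_of_le (Nat.floor_le_floor ?_), ?_, ?_⟩
  · exact div_le_div_of_nonneg_right (by linarith) hr.le
  · linarith [(le_div_iff₀ hr).1 (Nat.floor_le hx)]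
  · linarith [(div_le_iff₀ hr).1 (Nat.lt_floor_add_one ((x - x₀) / r)).le]

lemma ENNReal.toReal_inv_le_one {p : ENNReal} (hp : 1 ≤ p) : p.toReal⁻¹ ≤ 1 := by
  rcases eq_or_ne p ⊤ with rfl | hp_top
  · simp
  · exact inv_le_one_of_one_le₀ (by simpa using ENNReal.toReal_mono hp_top hp)

lemma setIntegral_norm_le_eLpNorm_mul_rpow {α E : Type*} [MeasurableSpace α]
    [NormedAddCommGroup E] {μ : Measure α} {f : α → E} {p : ENNReal} (hp : 1 ≤ p)
    (hf : MemLp f p μ) {s : Set α} (hs : μ s ≠ ⊤) :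
    ∫ x in s, ‖f x‖ ∂μ ≤ (eLpNorm f p μ).toReal * μ.real s ^ (1 - p.toReal⁻¹) := by
  have hσ := ENNReal.toReal_inv_le_one hp
  have hHolder : eLpNorm f 1 (μ.restrict s) ≤ eLpNorm f p μ * μ s ^ (1 - p.toReal⁻¹) := by
    calc eLpNorm f 1 (μ.restrict s)
        ≤ eLpNorm f p (μ.restrict s) * μ.restrict s univ ^ (1 - p.toReal⁻¹) := by
          simpa using eLpNorm_le_eLpNorm_mul_rpow_measure_univ hp hf.1.restrict
      _ ≤ eLpNorm f p μ * μ s ^ (1 - p.toReal⁻¹) := by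
          rw [Measure.restrict_apply_univ]
          gcongr
          exact Measure.restrict_le_self
  have hfin : eLpNorm f p μ * μ s ^ (1 - p.toReal⁻¹) ≠ ⊤ :=
    ENNReal.mul_ne_top hf.2.ne (ENNReal.rpow_ne_top_of_nonneg (by linarith) hs)
  calc ∫ x in s, ‖f x‖ ∂μ = (eLpNorm f 1 (μ.restrict s)).toReal := by
        rw [integral_norm_eq_lintegral_enorm hf.1.restrict, eLpNorm_one_eq_lintegral_enorm]
    _ ≤ (eLpNorm f p μ * μ s ^ (1 - p.toReal⁻¹)).toReal := ENNReal.toReal_mono hfin hHolder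
    _ = _ := by rw [ENNReal.toReal_mul, ← ENNReal.toReal_rpow, measureReal_def]

section Graph

variable {f f' : ℝ → ℝ} {a b : ℝ}

lemma abs_sub_le_integral_indicator_abs
    (hFTC : ∀ x ∈ Icc a b, ∀ y ∈ Icc a b, f x - f y = ∫ t in y..x, f' t)
    {s t : ℝ} (hs : s ∈ Icc a b) (ht : t ∈ Icc a b) (hst : s ≤ t) :
    |f t - f s| ≤ ∫ u in s..t, (Icc a b).indicator (fun u => |f' u|) u := by
  rw [hFTC t ht s hs]
  refine (intervalIntegral.abs_integral_le_integral_abs hst).trans_eq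
    (intervalIntegral.integral_congr fun u hu => ?_)
  rw [uIcc_of_le hst] at hu
  exact (indicator_of_mem (s := Icc a b) ⟨hs.1.trans hu.1, hu.2.trans ht.2⟩
    fun u => |f' u|).symm

lemma abs_sub_max_le_integral_indicator_abs
    (hFTC : ∀ x ∈ Icc a b, ∀ y ∈ Icc a b, f x - f y = ∫ t in y..x, f' t)
    (hInt : IntegrableOn f' (Icc a b)) {c d t : ℝ} (ht : t ∈ Icc a b) (htcd : t ∈ Icc c d) :
    |f t - f (max a c)| ≤ ∫ u in c..d, (Icc a b).indicator (fun u => |f' u|) u := by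
  have hst : max a c ≤ t := max_le ht.1 htcd.1
  refine (abs_sub_le_integral_indicator_abs hFTC ⟨le_max_left _ _, hst.trans ht.2⟩ ht hst).trans
    (intervalIntegral.integral_mono_interval (le_max_right _ _) hst htcd.2
      (Eventually.of_forall (indicator_nonneg fun _ _ => abs_nonneg _)) ?_)
  exact (IntegrableOn.integrable_indicator hInt.abs measurableSet_Icc).intervalIntegrable

lemma coverN_le_of_subset_graph
    (hFTC : ∀ x ∈ Icc a b, ∀ y ∈ Icc a b, f x - f y = ∫ t in y..x, f' t)
    (hInt : IntegrableOn f' (Icc a b)) {F : Set (ℝ × ℝ)} {x₀ L r : ℝ} (hr : 0 < r) (hL : 0 ≤ L)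
    (hF : F ⊆ FunGraph f (Icc a b ∩ Icc x₀ (x₀ + L))) :
    (coverN F r : ℝ) ≤ L / r + 1 +
      2 / r * ∫ u in x₀..x₀ + (⌊L / r⌋₊ + 1 : ℕ) * r, (Icc a b).indicator (fun u => |f' u|) u := by
  set g := (Icc a b).indicator (fun u => |f' u|)
  set n := ⌊L / r⌋₊ + 1
  set O : ℕ → ℝ := fun i => ∫ u in x₀ + i * r..x₀ + (i + 1) * r, g u
  have hg : Integrable g := IntegrableOn.integrable_indicator hInt.abs measurableSet_Icc
  have hg0 : 0 ≤ g := indicator_nonneg fun _ _ => abs_nonneg _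
  have hO0 : ∀ i : ℕ, 0 ≤ O i := fun i =>
    intervalIntegral.integral_nonneg (by nlinarith) fun u _ => hg0 u
  set y : ℕ → ℝ := fun i => f (max a (x₀ + i * r)) - O i
  have hgrid : ∀ w ∈ F, ∃ i < n, ∃ j < ⌊2 * O i / r⌋₊ + 1,
      w ∈ Icc (x₀ + i * r) (x₀ + (i + 1) * r) ×ˢ Icc (y i + j * r) (y i + (j + 1) * r) := by
    rintro _ hw
    obtain ⟨t, ⟨htI, htL⟩, rfl⟩ := hF hw
    obtain ⟨i, hin, hti⟩ := exists_lt_floor_div_add_one_mem_Icc hr htL.1 htL.2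
    have hosc := abs_le.1 (abs_sub_max_le_integral_indicator_abs hFTC hInt htI hti)
    obtain ⟨j, hjn, htj⟩ := exists_lt_floor_div_add_one_mem_Icc (x₀ := y i) (x := f t)
      (L := 2 * O i) hr (by linarith [hosc.1]) (by linarith [hosc.2])
    exact ⟨i, hin, j, hjn, hti, htj⟩
  have hsum : ∑ i ∈ Finset.range n, O i = ∫ u in x₀..x₀ + n * r, g u := by
    simpa using intervalIntegral.sum_integral_adjacent_intervals (a := fun i : ℕ => x₀ + i * r)
      (fun _ _ => hg.intervalIntegrable)
  have hcount : ∀ i, ((⌊2 * O i / r⌋₊ + 1 : ℕ) : ℝ) ≤ 2 / r * O i + 1 := fun i => by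
    rw [Nat.cast_add_one, div_mul_eq_mul_div]
    gcongr
    exact Nat.floor_le (by have := hO0 i; positivity)
  calc (coverN F r : ℝ) ≤ ∑ i ∈ Finset.range n, ((⌊2 * O i / r⌋₊ + 1 : ℕ) : ℝ) := by
        exact_mod_cast coverN_le_sum_of_forall_mem_grid hr.le hgrid
    _ ≤ ∑ i ∈ Finset.range n, (2 / r * O i + 1) := Finset.sum_le_sum fun i _ => hcount i
    _ = n + 2 / r * ∫ u in x₀..x₀ + n * r, g u := by
        rw [Finset.sum_add_distrib, ← Finset.mul_sum, hsum]
        simp [add_comm]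
    _ ≤ L / r + 1 + 2 / r * ∫ u in x₀..x₀ + n * r, g u := by
        gcongr
        rw [Nat.cast_add_one]
        linarith [Nat.floor_le (div_nonneg hL hr.le)]

lemma integral_indicator_abs_le_eLpNorm_mul_rpow {p : ENNReal} (hp : 1 ≤ p)
    (hLp : MemLp f' p (volume.restrict (Icc a b))) {c d : ℝ} (hcd : c ≤ d) :
    ∫ u in c..d, (Icc a b).indicator (fun u => |f' u|) u ≤
      (eLpNorm f' p (volume.restrict (Icc a b))).toReal * (d - c) ^ (1 - p.toReal⁻¹) := by
  have hvol : (volume.restrict (Icc a b)).real (Ioc c d) ≤ d - c := by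
    rw [measureReal_restrict_apply measurableSet_Ioc, ← Real.volume_real_Ioc_of_le hcd]
    exact measureReal_mono inter_subset_left measure_Ioc_lt_top.ne
  calc ∫ u in c..d, (Icc a b).indicator (fun u => |f' u|) u
      = ∫ u in Ioc c d, ‖f' u‖ ∂volume.restrict (Icc a b) := by
        rw [intervalIntegral.integral_of_le hcd, setIntegral_indicator measurableSet_Icc,
          Measure.restrict_restrict measurableSet_Ioc]
        rfl
    _ ≤ (eLpNorm f' p (volume.restrict (Icc a b))).toReal *
          (volume.restrict (Icc a b)).real (Ioc c d) ^ (1 - p.toReal⁻¹) :=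
        setIntegral_norm_le_eLpNorm_mul_rpow hp hLp (measure_ne_top _ _)
    _ ≤ _ := by
        have := ENNReal.toReal_inv_le_one hp
        gcongr

lemma coverN_closedBall_inter_graph_le {p : ENNReal} (hp : 1 ≤ p)
    (hLp : MemLp f' p (volume.restrict (Icc a b)))
    (hFTC : ∀ x ∈ Icc a b, ∀ y ∈ Icc a b, f x - f y = ∫ t in y..x, f' t)
    (z : ℝ × ℝ) {R r : ℝ} (hr : 0 < r) (hrR : r ≤ R) :
    (coverN (closedBall z R ∩ FunGraph f (Icc a b)) r : ℝ) ≤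
      3 * (R / r) + 6 * (eLpNorm f' p (volume.restrict (Icc a b))).toReal *
        (R ^ (1 - p.toReal⁻¹) / r) := by
  set A := (eLpNorm f' p (volume.restrict (Icc a b))).toReal
  set σ := p.toReal⁻¹
  set n := ⌊2 * R / r⌋₊ + 1
  have hR : 0 < R := hr.trans_le hrR
  have hσ : 0 ≤ 1 - σ := sub_nonneg.2 (ENNReal.toReal_inv_le_one hp)
  have hsub : closedBall z R ∩ FunGraph f (Icc a b) ⊆
      FunGraph f (Icc a b ∩ Icc (z.1 - R) (z.1 - R + 2 * R)) := by
    rintro _ ⟨hw, t, ht, rfl⟩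
    have := abs_le.1 (Real.dist_eq t z.1 ▸ (le_max_left _ _).trans (mem_closedBall.1 hw))
    exact ⟨t, ⟨ht, by linarith, by linarith⟩, rfl⟩
  have hn : (n : ℝ) * r ≤ 3 * R := by
    have : (n : ℝ) ≤ 2 * R / r + 1 := by
      rw [Nat.cast_add_one]
      gcongr
      exact Nat.floor_le (by positivity)
    calc (n : ℝ) * r ≤ (2 * R / r + 1) * r := by gcongr
      _ = 2 * R + r := by field_simp
      _ ≤ 3 * R := by linarith
  have hosc : ∫ u in z.1 - R..z.1 - R + n * r, (Icc a b).indicator (fun u => |f' u|) u ≤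
      A * (3 * R ^ (1 - σ)) := by
    calc _ ≤ A * (z.1 - R + n * r - (z.1 - R)) ^ (1 - σ) :=
          integral_indicator_abs_le_eLpNorm_mul_rpow hp hLp (le_add_of_nonneg_right (by positivity))
      _ ≤ A * (3 * R) ^ (1 - σ) := by rw [add_sub_cancel_left]; gcongr
      _ ≤ A * (3 * R ^ (1 - σ)) := by
          rw [Real.mul_rpow zero_le_three hR.le]
          gcongr
          exact Real.rpow_le_self_of_one_le (by norm_num) (sub_le_self _ (by positivity))
  have hRr : 1 ≤ R / r := (one_le_div hr).2 hrR
  calc _ ≤ 2 * R / r + 1 + 2 / r * (A * (3 * R ^ (1 - σ))) :=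
        (coverN_le_of_subset_graph hFTC (hLp.integrable hp) hr (by positivity) hsub).trans
          (by gcongr)
    _ ≤ 3 * (R / r) + 6 * A * (R ^ (1 - σ) / r) := by
        rw [mul_div_assoc]
        linarith [show 2 / r * (A * (3 * R ^ (1 - σ))) = 6 * A * (R ^ (1 - σ) / r) by ring]

end Graph

lemma one_sub_div_mul_le {θ θ' σ : ℝ} (hθ' : 0 < θ') (hθ'θ : θ' ≤ θ) (hθ1 : θ < 1) (hσ : 0 ≤ σ) :
    (1 - 1 / θ') * (1 + θ * σ / (1 - θ)) ≤ 1 - σ - 1 / θ' := by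
  have h1θ : 0 < 1 - θ := by linarith
  have hgap : (1 - 1 / θ') * (1 + θ * σ / (1 - θ)) =
      1 - σ - 1 / θ' - σ * (θ - θ') / (θ' * (1 - θ)) := by
    field_simp
    ring
  rw [hgap]
  have : 0 ≤ σ * (θ - θ') / (θ' * (1 - θ)) := by
    have := sub_nonneg.2 hθ'θ
    positivity
  linarith

lemma rpow_one_sub_div_le_div_rpow {R θ θ' σ : ℝ} (hR0 : 0 < R) (hR1 : R ≤ 1) (hθ' : 0 < θ')
    (hθ'θ : θ' ≤ θ) (hθ1 : θ < 1) (hσ : 0 ≤ σ) :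
    R ^ (1 - σ) / R ^ (1 / θ') ≤ (R / R ^ (1 / θ')) ^ (1 + θ * σ / (1 - θ)) := by
  have hquot : R / R ^ (1 / θ') = R ^ (1 - 1 / θ') := by rw [Real.rpow_sub hR0, Real.rpow_one]
  rw [hquot, ← Real.rpow_sub hR0, ← Real.rpow_mul hR0.le]
  exact Real.rpow_le_rpow_of_exponent_ge hR0 hR1 (one_sub_div_mul_le hθ' hθ'θ hθ1 hσ)

lemma assouadSpectrum_le {E : Set (ℝ × ℝ)} {θ β C : ℝ} (hβ : 0 < β) (hC : 0 < C)
    (h : ∀ z ∈ E, ∀ R : ℝ, 0 < R → R < 1 →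
      (coverN (closedBall z R ∩ E) (R ^ (1 / θ)) : ℝ) ≤ C * (R / R ^ (1 / θ)) ^ β) :
    assouadSpectrum E θ ≤ β :=
  csInf_le ⟨0, fun _ hx => hx.1.le⟩ ⟨hβ, C, hC, h⟩

lemma assouadSpectrumReg_le {E : Set (ℝ × ℝ)} {θ β : ℝ} (hβ : 0 ≤ β)
    (h : ∀ θ', 0 < θ' → θ' < θ → assouadSpectrum E θ' ≤ β) :
    assouadSpectrumReg E θ ≤ β :=
  Real.sSup_le (by rintro _ ⟨θ', h0, h1, rfl⟩; exact h θ' h0 h1) hβ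

theorem stmt12_general (f f' : ℝ → ℝ) (a b : ℝ) (p : ENNReal) (θ : ℝ) (hp : 1 ≤ p)
    (hLp : MeasureTheory.MemLp f' p (MeasureTheory.volume.restrict (Set.Icc a b)))
    (hFTC : ∀ x ∈ Set.Icc a b, ∀ y ∈ Set.Icc a b, f x - f y = ∫ t in y..x, f' t)
    (hθ : 0 < θ) (hθ1 : θ < 1) :
    assouadSpectrumReg (FunGraph f (Set.Icc a b)) θ ≤ 1 + θ / ((1 - θ) * p.toReal) := by
  set A := (eLpNorm f' p (volume.restrict (Icc a b))).toReal
  set σ := p.toReal⁻¹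
  have hσ : 0 ≤ σ := inv_nonneg.2 ENNReal.toReal_nonneg
  rw [show θ / ((1 - θ) * p.toReal) = θ * σ / (1 - θ) by rw [mul_comm, ← div_div, div_eq_mul_inv θ]]
  set β := 1 + θ * σ / (1 - θ)
  have hβ : 1 ≤ β := le_add_of_nonneg_right (div_nonneg (by positivity) (by linarith))
  refine assouadSpectrumReg_le (by linarith) fun θ' hθ' hθ'θ => ?_
  refine assouadSpectrum_le (by linarith) (C := 3 + 6 * A) (by positivity) fun z _ R hR0 hR1 => ?_
  set r := R ^ (1 / θ')
  have hr : 0 < r := Real.rpow_pos_of_pos hR0 _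
  have hrR : r ≤ R :=
    Real.rpow_le_self_of_le_one hR0.le hR1.le ((one_le_div hθ').2 (hθ'θ.trans hθ1).le)
  calc _ ≤ 3 * (R / r) + 6 * A * (R ^ (1 - σ) / r) :=
        coverN_closedBall_inter_graph_le hp hLp hFTC z hr hrR
    _ ≤ 3 * (R / r) ^ β + 6 * A * (R / r) ^ β := by
        gcongr
        · exact Real.self_le_rpow_of_one_le ((one_le_div hr).2 hrR) hβ
        · exact rpow_one_sub_div_le_div_rpow hR0 hR1.le hθ' hθ'θ.le hθ1 hσ
    _ = _ := by ring

/-- regularized Assouad spectrum bound for Sobolev graphs, `1 ≤ p ≤ ∞`.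
The condition `0 < θ < p/(p+1)` is encoded as `θ < 1` and `θ/(1-θ) < p`; for `p = ∞` the
bound `1 + θ/((1-θ)·p.toReal)` equals `1` by the convention `x/0 = 0`. -/
theorem stmt12 (f f' : ℝ → ℝ) (a b : ℝ) (p : ENNReal) (θ : ℝ) (hab : a ≤ b) (hp : 1 ≤ p)
    (hcont : ContinuousOn f (Set.Icc a b))
    (hLp : MeasureTheory.MemLp f' p (MeasureTheory.volume.restrict (Set.Icc a b)))
    (hFTC : ∀ x ∈ Set.Icc a b, ∀ y ∈ Set.Icc a b, f x - f y = ∫ t in y..x, f' t)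
    (hθ : 0 < θ) (hθ1 : θ < 1) (hθp : ENNReal.ofReal (θ / (1 - θ)) < p) :
    assouadSpectrumReg (FunGraph f (Set.Icc a b)) θ ≤ 1 + θ / ((1 - θ) * p.toReal) :=
  stmt12_general f f' a b p θ hp hLp hFTC hθ hθ1
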